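/- Let M = (L, μ0, Σ, δ) be an MDP. Suppose the perfect-information subset construction M^P has an accessible cycle C = s_0 σ̂_0 s_1 … σ̂_{d-1} s_d reached from the initial cell by a path p_0 σ̂'_0 p_1 … σ̂'_{m-1} p_m with p_0 = Supp(μ0) and p_m = s_0, such that C has exactly one minimal recurrent cyclic set G and every g ∈ G is a singleton. Then the pure strategy α that plays σ̂'_k(Last(h)) on histories h of length k < m and σ̂_{(k−m) mod d}(Last(h)) on histories of length k ≥ m makes M strongly synchronizing: lim_{n→∞} ‖X_n^α‖ = 1. -/
import Mathlib


open Filter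

namespace SyncMDP

/-- A history: an initial state followed by a list of (action, state) steps. -/
structure Hist (L A : Type) where
  start : L
  steps : List (A × L)
deriving DecidableEq

variable {L A : Type}

/-- The last state of a history. -/
def Hist.last (h : Hist L A) : L := h.steps.foldl (fun _ p => p.2) h.start

/-- The length of a history. -/
def Hist.len (h : Hist L A) : ℕ := h.steps.length

/-- Extending a history by one action and one state. -/
def Hist.extend (h : Hist L A) (a : A) (l : L) : Hist L A := ⟨h.start, h.steps ++ [(a, l)]⟩

/-- A probability distribution on a finite type. -/
def IsDist {S : Type} [Fintype S] (d : S → ℝ) : Prop :=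
  (∀ s, 0 ≤ d s) ∧ ∑ s, d s = 1

/-- A probabilistic transition function. -/
def IsTrans [Fintype L] (δ : L → A → L → ℝ) : Prop := ∀ l a, IsDist (δ l a)

/-- A (randomized) strategy assigns a distribution over actions to every history. -/
def IsStrategy [Fintype A] (α : Hist L A → A → ℝ) : Prop :=
  ∀ h : Hist L A, (∀ a, 0 ≤ α h a) ∧ ∑ a, α h a = 1

/-- A pure strategy plays one action with probability one after every history. -/
def PureStrat (α : Hist L A → A → ℝ) : Prop := ∀ h, ∃ a, α h a = 1

/-- A blind strategy only depends on the length of the history. -/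
def BlindStrat (α : Hist L A → A → ℝ) : Prop :=
  ∀ h₁ h₂ : Hist L A, h₁.len = h₂.len → α h₁ = α h₂

/-- A memoryless strategy only depends on the last state of the history. -/
def Memoryless (α : Hist L A → A → ℝ) : Prop :=
  ∀ h₁ h₂ : Hist L A, h₁.last = h₂.last → α h₁ = α h₂

/-- Auxiliary product for the probability of a history: the first argument is the current
state, the second the history (prefix) read so far, the third the remaining steps. -/
def prAux (δ : L → A → L → ℝ) (α : Hist L A → A → ℝ) : L → Hist L A → List (A × L) → ℝ
  | _, _, [] => 1
  | cur, pre, (a, l) :: rest => α pre a * δ cur a l * prAux δ α l (pre.extend a l) rest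

/-- The probability `Pr^α(h)` of a history `h`. -/
def pr (μ0 : L → ℝ) (δ : L → A → L → ℝ) (α : Hist L A → A → ℝ) (h : Hist L A) : ℝ :=
  μ0 h.start * prAux δ α h.start ⟨h.start, []⟩ h.steps

variable (L A) in
/-- The finite set of all histories of length `n`. -/
def hists [Fintype L] [DecidableEq L] [Fintype A] [DecidableEq A] : ℕ → Finset (Hist L A)
  | 0 => Finset.univ.image fun l : L => ⟨l, []⟩
  | n + 1 => (hists n).biUnion fun h => Finset.univ.image fun p : A × L => h.extend p.1 p.2

variable [Fintype L] [DecidableEq L] [Fintype A] [DecidableEq A]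

/-- The outcome `X_n^α` : the distribution over states at step `n` under strategy `α`. -/
noncomputable def outcome (μ0 : L → ℝ) (δ : L → A → L → ℝ) (α : Hist L A → A → ℝ)
    (n : ℕ) (l : L) : ℝ :=
  ∑ h ∈ (hists L A n).filter (fun h => h.last = l), pr μ0 δ α h

/-- The norm `‖X‖ = max_{ℓ ∈ L} X(ℓ)` of a distribution on a (nonempty) finite type. -/
noncomputable def dnorm (X : L → ℝ) : ℝ := ⨆ l, X l

/-- Strongly synchronizing: `liminf_n ‖X_n^α‖ = 1`. -/
def StronglySync (μ0 : L → ℝ) (δ : L → A → L → ℝ) (α : Hist L A → A → ℝ) : Prop :=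
  liminf (fun n => dnorm (outcome μ0 δ α n)) atTop = 1

/-- Weakly synchronizing: `limsup_n ‖X_n^α‖ = 1`. -/
def WeaklySync (μ0 : L → ℝ) (δ : L → A → L → ℝ) (α : Hist L A → A → ℝ) : Prop :=
  limsup (fun n => dnorm (outcome μ0 δ α n)) atTop = 1

open Classical in
/-- `Post_σ(ℓ)`: the support of `δ(ℓ,σ)`. -/
noncomputable def post (δ : L → A → L → ℝ) (l : L) (a : A) : Finset L :=
  Finset.univ.filter fun l' => 0 < δ l a l'

/-- Transition function of the perfect-information subset construction. -/
noncomputable def deltaP (δ : L → A → L → ℝ) (s : Finset L) (f : L → A) : Finset L :=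
  s.biUnion fun l => post δ l (f l)

/-- Transition function of the blind subset construction. -/
noncomputable def deltaB (δ : L → A → L → ℝ) (s : Finset L) (a : A) : Finset L :=
  s.biUnion fun l => post δ l a

open Classical in
/-- The initial cell: the support of `μ0`. -/
noncomputable def initCell (μ0 : L → ℝ) : Finset L :=
  Finset.univ.filter fun l => 0 < μ0 l

/-- Reachability of a cell from the initial cell in the perfect-information
subset construction. -/
def ReachP (μ0 : L → ℝ) (δ : L → A → L → ℝ) (s : Finset L) : Prop :=
  Relation.ReflTransGen (fun t t' => ∃ f : L → A, deltaP δ t f = t') (initCell μ0) s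

/-- Reachability of a cell from the initial cell in the blind subset construction. -/
def ReachB (μ0 : L → ℝ) (δ : L → A → L → ℝ) (s : Finset L) : Prop :=
  Relation.ReflTransGen (fun t t' => ∃ a : A, deltaB δ t a = t') (initCell μ0) s

/-- Cyclic successor on `Fin d`. -/
def cyc {d : ℕ} (hd : 0 < d) (i : Fin d) : Fin d := ⟨((i : ℕ) + 1) % d, Nat.mod_lt _ hd⟩

/-- A recurrent cyclic set for the cycle `(s, act)` of length `d` of the
perfect-information subset construction. -/
def IsRCSP {d : ℕ} (hd : 0 < d) (δ : L → A → L → ℝ) (s : Fin d → Finset L)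
    (act : Fin d → L → A) (g : Fin d → Finset L) : Prop :=
  ∀ i : Fin d, (g i).Nonempty ∧ g i ⊆ s i ∧
    (g i).biUnion (fun l => post δ l (act i l)) = g (cyc hd i)

/-- A minimal recurrent cyclic set (perfect-information). -/
def IsMinRCSP {d : ℕ} (hd : 0 < d) (δ : L → A → L → ℝ) (s : Fin d → Finset L)
    (act : Fin d → L → A) (g : Fin d → Finset L) : Prop :=
  IsRCSP hd δ s act g ∧
    ∀ g' : Fin d → Finset L, IsRCSP hd δ s act g' → (∀ i, g' i ⊆ g i) → g' = g

/-- A recurrent cyclic set for the cycle `(s, act)` of length `d` of the blind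
subset construction. -/
def IsRCSB {d : ℕ} (hd : 0 < d) (δ : L → A → L → ℝ) (s : Fin d → Finset L)
    (act : Fin d → A) (g : Fin d → Finset L) : Prop :=
  ∀ i : Fin d, (g i).Nonempty ∧ g i ⊆ s i ∧
    (g i).biUnion (fun l => post δ l (act i)) = g (cyc hd i)

/-- A minimal recurrent cyclic set (blind). -/
def IsMinRCSB {d : ℕ} (hd : 0 < d) (δ : L → A → L → ℝ) (s : Fin d → Finset L)
    (act : Fin d → A) (g : Fin d → Finset L) : Prop :=
  IsRCSB hd δ s act g ∧
    ∀ g' : Fin d → Finset L, IsRCSB hd δ s act g' → (∀ i, g' i ⊆ g i) → g' = g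


set_option linter.unusedSectionVars false

section AuxLemmas
variable {δ : L → A → L → ℝ} {F : ℕ → L → A}

-- ### new material

lemma Hist.last_extend (h : Hist L A) (a : A) (l : L) : (h.extend a l).last = l := by
  simp [Hist.last, Hist.extend, List.foldl_append]

lemma Hist.len_extend (h : Hist L A) (a : A) (l : L) : (h.extend a l).len = h.len + 1 := by
  simp [Hist.len, Hist.extend]

lemma len_of_mem_hists : ∀ n (h : Hist L A), h ∈ hists L A n → h.len = n
  | 0, h, hm => by
      simp only [hists, Finset.mem_image, Finset.mem_univ] at hm
      obtain ⟨l, -, rfl⟩ := hm; rfl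
  | n+1, h, hm => by
      simp only [hists, Finset.mem_biUnion, Finset.mem_image, Finset.mem_univ] at hm
      obtain ⟨h', hh', q, -, rfl⟩ := hm
      rw [Hist.len_extend, len_of_mem_hists n h' hh']

lemma extend_eq_iff {h₁ h₂ : Hist L A} {a₁ a₂ : A} {x₁ x₂ : L} :
    h₁.extend a₁ x₁ = h₂.extend a₂ x₂ ↔ h₁ = h₂ ∧ a₁ = a₂ ∧ x₁ = x₂ := by
  constructor
  · intro he
    have he' : (⟨h₁.start, h₁.steps ++ [(a₁, x₁)]⟩ : Hist L A)
        = ⟨h₂.start, h₂.steps ++ [(a₂, x₂)]⟩ := he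
    rw [Hist.mk.injEq] at he'
    obtain ⟨hs, hst⟩ := he'
    obtain ⟨h3, h4⟩ := List.append_inj' hst rfl
    simp only [List.cons.injEq, Prod.mk.injEq] at h4
    obtain ⟨⟨rfl, rfl⟩, -⟩ := h4
    cases h₁; cases h₂
    simp_all [Hist.extend]
  · rintro ⟨rfl, rfl, rfl⟩; rfl

lemma prAux_append (δ : L → A → L → ℝ) (α : Hist L A → A → ℝ) :
    ∀ (rest : List (A × L)) (cur st : L) (done : List (A × L)) (a : A) (l : L),
    prAux δ α cur ⟨st, done⟩ (rest ++ [(a, l)]) =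
      prAux δ α cur ⟨st, done⟩ rest *
        (α ⟨st, done ++ rest⟩ a * δ (rest.foldl (fun _ p => p.2) cur) a l)
  | [], cur, st, done, a, l => by
      simp [prAux, Hist.extend]
  | (b, x) :: r, cur, st, done, a, l => by
      show α ⟨st, done⟩ b * δ cur b x * prAux δ α x ⟨st, done ++ [(b, x)]⟩ (r ++ [(a, l)]) =
        (α ⟨st, done⟩ b * δ cur b x * prAux δ α x ⟨st, done ++ [(b, x)]⟩ r) *
          (α ⟨st, done ++ ((b, x) :: r)⟩ a * δ (((b, x) :: r).foldl (fun _ p => p.2) cur) a l)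
      rw [prAux_append δ α r x st (done ++ [(b, x)]) a l]
      simp only [List.foldl_cons, List.append_assoc, List.singleton_append]
      ring

lemma pr_extend (μ0 : L → ℝ) (δ : L → A → L → ℝ) (α : Hist L A → A → ℝ)
    (h : Hist L A) (a : A) (l : L) :
    pr μ0 δ α (h.extend a l) = pr μ0 δ α h * (α h a * δ h.last a l) := by
  show μ0 h.start * prAux δ α h.start ⟨h.start, []⟩ (h.steps ++ [(a, l)]) = _
  rw [prAux_append]
  have : (⟨h.start, [] ++ h.steps⟩ : Hist L A) = h := by cases h; simp
  rw [this]
  show _ = μ0 h.start * prAux δ α h.start ⟨h.start, []⟩ h.steps * _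
  rw [Hist.last]
  ring

noncomputable def stepD (δ : L → A → L → ℝ) (f : L → A) (X : L → ℝ) (l : L) : ℝ :=
  ∑ l', X l' * δ l' (f l') l

lemma outcome_zero (μ0 : L → ℝ) (δ : L → A → L → ℝ) (α : Hist L A → A → ℝ) :
    outcome μ0 δ α 0 = μ0 := by
  funext l
  unfold outcome
  rw [Finset.sum_filter]
  rw [show hists L A 0 = Finset.univ.image fun l : L => (⟨l, []⟩ : Hist L A) from rfl]
  rw [Finset.sum_image (by intro x _ y _ hxy; exact congrArg Hist.start hxy)]
  have : ∀ x : L, (if (Hist.mk x ([] : List (A × L))).last = l then pr μ0 δ α ⟨x, []⟩ else 0)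
      = if x = l then μ0 x else 0 := by
    intro x
    by_cases hx : x = l <;> simp [hx, Hist.last, pr, prAux]
  rw [Finset.sum_congr rfl fun x _ => this x]
  simp

lemma outcome_succ (μ0 : L → ℝ) (δ : L → A → L → ℝ) (F : ℕ → L → A)
    (α : Hist L A → A → ℝ)
    (hα : α = fun h a => if a = F h.len h.last then 1 else 0) (n : ℕ) :
    outcome μ0 δ α (n + 1) = stepD δ (F n) (outcome μ0 δ α n) := by
  funext l
  unfold outcome
  rw [Finset.sum_filter]
  rw [show hists L A (n+1) =
    (hists L A n).biUnion (fun h => Finset.univ.image fun p : A × L => h.extend p.1 p.2) from rfl]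
  rw [Finset.sum_biUnion]
  swap
  · intro h₁ h1m h₂ h2m hne
    simp only [Finset.disjoint_left, Finset.mem_image, Finset.mem_univ]
    rintro x ⟨q, -, rfl⟩ ⟨q', -, he⟩
    exact hne ((extend_eq_iff.1 he.symm).1) |>.elim
  have hinner : ∀ h ∈ hists L A n,
      (∑ h' ∈ Finset.univ.image fun p : A × L => h.extend p.1 p.2,
        if h'.last = l then pr μ0 δ α h' else 0)
      = pr μ0 δ α h * δ h.last (F n h.last) l := by
    intro h hm
    rw [Finset.sum_image (by
      intro x _ y _ hxy
      obtain ⟨-, h1, h2⟩ := extend_eq_iff.1 hxy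
      exact Prod.ext h1 h2)]
    have hlen := len_of_mem_hists n h hm
    have : ∀ q : A × L, (if (h.extend q.1 q.2).last = l then pr μ0 δ α (h.extend q.1 q.2) else 0)
        = if q.2 = l then pr μ0 δ α h * ((if q.1 = F n h.last then 1 else 0) * δ h.last q.1 q.2) else 0 := by
      intro q
      rw [Hist.last_extend, pr_extend, hα]
      simp only [hlen]
    rw [Finset.sum_congr rfl fun q _ => this q]
    rw [Fintype.sum_prod_type]
    have : ∀ a : A, (∑ x : L, if x = l then
        pr μ0 δ α h * ((if a = F n h.last then 1 else 0) * δ h.last a x) else 0)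
        = if a = F n h.last then pr μ0 δ α h * δ h.last a l else 0 := by
      intro a
      rw [Finset.sum_ite_eq' Finset.univ l
        (fun x => pr μ0 δ α h * ((if a = F n h.last then 1 else 0) * δ h.last a x))]
      by_cases ha : a = F n h.last <;> simp [ha]
    rw [Finset.sum_congr rfl fun a _ => this a]
    simp
  rw [Finset.sum_congr rfl hinner]
  -- now group by last state
  rw [← Finset.sum_fiberwise_of_maps_to (g := fun h : Hist L A => h.last)
      (t := Finset.univ) (fun h _ => Finset.mem_univ _)]
  unfold stepD
  refine Finset.sum_congr rfl fun l' _ => ?_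
  have hcong : ∀ h ∈ (hists L A n).filter (fun h => h.last = l'),
      pr μ0 δ α h * δ h.last (F n h.last) l = pr μ0 δ α h * δ l' (F n l') l := by
    intro h hm
    rw [(Finset.mem_filter.1 hm).2]
  rw [Finset.sum_congr rfl hcong, ← Finset.sum_mul]


-- ## chunk 2

variable {δ : L → A → L → ℝ}

lemma mem_post_iff {l : L} {a : A} {l' : L} : l' ∈ post δ l a ↔ 0 < δ l a l' := by
  simp [post]

lemma mem_deltaP_iff {S : Finset L} {f : L → A} {l : L} :
    l ∈ deltaP δ S f ↔ ∃ x ∈ S, 0 < δ x (f x) l := by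
  simp [deltaP, mem_post_iff]

lemma dist_pos_exists {S : Type} [Fintype S] {X : S → ℝ} (hX : IsDist X) :
    ∃ x, 0 < X x := by
  by_contra hc
  push_neg at hc
  have hz : ∀ x, X x = 0 := fun x => le_antisymm (hc x) (hX.1 x)
  have h1 := hX.2
  rw [Finset.sum_eq_zero fun x _ => hz x] at h1
  norm_num at h1

lemma post_nonempty (hδ : IsTrans δ) (l : L) (a : A) : (post δ l a).Nonempty := by
  obtain ⟨x, hx⟩ := dist_pos_exists (hδ l a)
  exact ⟨x, mem_post_iff.2 hx⟩

lemma deltaP_nonempty (hδ : IsTrans δ) {S : Finset L} (hS : S.Nonempty) (f : L → A) :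
    (deltaP δ S f).Nonempty := by
  obtain ⟨x, hx⟩ := hS
  obtain ⟨y, hy⟩ := post_nonempty hδ x (f x)
  exact ⟨y, mem_deltaP_iff.2 ⟨x, hx, mem_post_iff.1 hy⟩⟩

lemma deltaP_mono {S T : Finset L} (h : S ⊆ T) (f : L → A) :
    deltaP δ S f ⊆ deltaP δ T f := by
  intro l hl
  obtain ⟨x, hx, hp⟩ := mem_deltaP_iff.1 hl
  exact mem_deltaP_iff.2 ⟨x, h hx, hp⟩

lemma deltaP_biUnion {ι : Type} [DecidableEq ι] (T : Finset ι) (V : ι → Finset L) (f : L → A) :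
    deltaP δ (T.biUnion V) f = T.biUnion fun i => deltaP δ (V i) f := by
  ext l
  simp only [mem_deltaP_iff, Finset.mem_biUnion]
  constructor
  · rintro ⟨x, ⟨i, hi, hx⟩, hp⟩; exact ⟨i, hi, x, hx, hp⟩
  · rintro ⟨i, hi, x, hx, hp⟩; exact ⟨x, ⟨i, hi, hx⟩, hp⟩

lemma stepD_nonneg (hδ : IsTrans δ) {X : L → ℝ} (hX : ∀ l, 0 ≤ X l) (f : L → A) (l : L) :
    0 ≤ stepD δ f X l :=
  Finset.sum_nonneg fun l' _ => mul_nonneg (hX l') ((hδ l' (f l')).1 l)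

lemma stepD_sum (hδ : IsTrans δ) (X : L → ℝ) (f : L → A) :
    ∑ l, stepD δ f X l = ∑ l', X l' := by
  unfold stepD
  rw [Finset.sum_comm]
  refine Finset.sum_congr rfl fun l' _ => ?_
  rw [← Finset.mul_sum, (hδ l' (f l')).2, mul_one]

lemma stepD_ge (hδ : IsTrans δ) {X : L → ℝ} (hX : ∀ l, 0 ≤ X l) (f : L → A) (l' l : L) :
    X l' * δ l' (f l') l ≤ stepD δ f X l :=
  Finset.single_le_sum (fun x _ => mul_nonneg (hX x) ((hδ x (f x)).1 l)) (Finset.mem_univ l')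

lemma stepD_pos_iff (hδ : IsTrans δ) {X : L → ℝ} (hX : ∀ l, 0 ≤ X l) (f : L → A) (l : L) :
    0 < stepD δ f X l ↔ ∃ l', 0 < X l' ∧ 0 < δ l' (f l') l := by
  constructor
  · intro hpos
    by_contra hc
    push_neg at hc
    have hz : ∀ l', X l' * δ l' (f l') l = 0 := by
      intro l'
      rcases lt_or_eq_of_le (hX l') with hx | hx
      · rcases lt_or_eq_of_le ((hδ l' (f l')).1 l) with hdp | hdp
        · exact absurd hdp (not_lt_of_ge (hc l' hx))
        · rw [← hdp, mul_zero]
      · rw [← hx, zero_mul]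
    rw [stepD, Finset.sum_eq_zero fun l' _ => hz l'] at hpos
    exact lt_irrefl 0 hpos
  · rintro ⟨l', hx, hp⟩
    exact lt_of_lt_of_le (mul_pos hx hp) (stepD_ge hδ hX f l' l)

lemma stepD_weighted {ι : Type} (f : L → A) (T : Finset ι) (c : ι → ℝ) (X : ι → L → ℝ) (l : L) :
    stepD δ f (fun x => ∑ i ∈ T, c i * X i x) l = ∑ i ∈ T, c i * stepD δ f (X i) l := by
  unfold stepD
  simp only [Finset.sum_mul]
  rw [Finset.sum_comm]
  refine Finset.sum_congr rfl fun i _ => ?_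
  rw [Finset.mul_sum]
  refine Finset.sum_congr rfl fun l' _ => ?_
  ring

noncomputable def kern (δ : L → A → L → ℝ) (F : ℕ → L → A) (n₀ : ℕ) : ℕ → L → L → ℝ
  | 0 => fun l' l => if l = l' then 1 else 0
  | t+1 => fun l' => stepD δ (F (n₀ + t)) (kern δ F n₀ t l')

noncomputable def wset (δ : L → A → L → ℝ) (F : ℕ → L → A) (n₀ : ℕ) (S : Finset L) :
    ℕ → Finset L
  | 0 => S
  | t+1 => deltaP δ (wset δ F n₀ S t) (F (n₀ + t))

variable {F : ℕ → L → A}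

lemma kern_nonneg (hδ : IsTrans δ) (n₀ : ℕ) : ∀ t l' l, 0 ≤ kern δ F n₀ t l' l
  | 0, l', l => by unfold kern; split <;> norm_num
  | t+1, l', l => stepD_nonneg hδ (kern_nonneg hδ n₀ t l') _ l

lemma kern_sum (hδ : IsTrans δ) (n₀ : ℕ) : ∀ t l', ∑ l, kern δ F n₀ t l' l = 1
  | 0, l' => by simp [kern]
  | t+1, l' => by
      show ∑ l, stepD δ (F (n₀ + t)) (kern δ F n₀ t l') l = 1
      rw [stepD_sum hδ, kern_sum hδ n₀ t l']

lemma kern_le_one (hδ : IsTrans δ) (n₀ t : ℕ) (l' l : L) : kern δ F n₀ t l' l ≤ 1 := by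
  rw [← kern_sum hδ n₀ t l']
  exact Finset.single_le_sum (fun x _ => kern_nonneg hδ n₀ t l' x) (Finset.mem_univ l)

lemma kern_shift (n₀ n₁ : ℕ) :
    ∀ t, (∀ j, j < t → F (n₀ + j) = F (n₁ + j)) → kern δ F n₀ t = kern δ F n₁ t
  | 0, _ => rfl
  | t+1, hF => by
      funext l' l
      show stepD δ (F (n₀ + t)) (kern δ F n₀ t l') l = stepD δ (F (n₁ + t)) (kern δ F n₁ t l') l
      rw [hF t (Nat.lt_succ_self t), kern_shift n₀ n₁ t fun j hj => hF j (hj.trans (Nat.lt_succ_self t))]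

lemma kern_chapman (n₀ t : ℕ) :
    ∀ u l' l, kern δ F n₀ (t + u) l' l = ∑ x, kern δ F n₀ t l' x * kern δ F (n₀ + t) u x l
  | 0, l', l => by simp [kern]
  | u+1, l', l => by
      have h1 : t + (u + 1) = (t + u) + 1 := by ring
      rw [h1]
      show stepD δ (F (n₀ + (t + u))) (kern δ F n₀ (t + u) l') l = _
      have h2 : kern δ F n₀ (t + u) l' =
          fun x => ∑ y, kern δ F n₀ t l' y * kern δ F (n₀ + t) u y x := by
        funext x; exact kern_chapman n₀ t u l' x
      rw [h2, stepD_weighted]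
      refine Finset.sum_congr rfl fun y _ => ?_
      have h3 : n₀ + (t + u) = (n₀ + t) + u := by ring
      rw [h3]
      rfl

lemma kern_pos_iff (hδ : IsTrans δ) (n₀ : ℕ) :
    ∀ t l' l, (0 < kern δ F n₀ t l' l ↔ l ∈ wset δ F n₀ {l'} t)
  | 0, l', l => by
      unfold kern wset
      constructor
      · intro h
        split at h
        · simp_all
        · norm_num at h
      · intro h
        simp only [Finset.mem_singleton] at h
        simp [h]
  | t+1, l', l => by
      show 0 < stepD δ (F (n₀ + t)) (kern δ F n₀ t l') l ↔
        l ∈ deltaP δ (wset δ F n₀ {l'} t) (F (n₀ + t))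
      rw [stepD_pos_iff hδ (kern_nonneg hδ n₀ t l'), mem_deltaP_iff]
      constructor
      · rintro ⟨x, hx, hp⟩; exact ⟨x, (kern_pos_iff hδ n₀ t l' x).1 hx, hp⟩
      · rintro ⟨x, hx, hp⟩; exact ⟨x, (kern_pos_iff hδ n₀ t l' x).2 hx, hp⟩

lemma wset_mono {S T : Finset L} (h : S ⊆ T) (n₀ : ℕ) :
    ∀ t, wset δ F n₀ S t ⊆ wset δ F n₀ T t
  | 0 => h
  | t+1 => deltaP_mono (wset_mono h n₀ t) _

lemma wset_nonempty (hδ : IsTrans δ) {S : Finset L} (hS : S.Nonempty) (n₀ : ℕ) :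
    ∀ t, (wset δ F n₀ S t).Nonempty
  | 0 => hS
  | t+1 => deltaP_nonempty hδ (wset_nonempty hδ hS n₀ t) _

lemma wset_add (n₀ t : ℕ) (S : Finset L) :
    ∀ u, wset δ F n₀ S (t + u) = wset δ F (n₀ + t) (wset δ F n₀ S t) u
  | 0 => rfl
  | u+1 => by
      have h1 : t + (u + 1) = (t + u) + 1 := by ring
      rw [h1]
      show deltaP δ (wset δ F n₀ S (t + u)) (F (n₀ + (t + u))) = _
      rw [wset_add n₀ t S u]
      have h3 : n₀ + (t + u) = (n₀ + t) + u := by ring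
      rw [h3]
      rfl

lemma wset_shift (n₀ n₁ : ℕ) (S : Finset L) :
    ∀ t, (∀ j, j < t → F (n₀ + j) = F (n₁ + j)) → wset δ F n₀ S t = wset δ F n₁ S t
  | 0, _ => rfl
  | t+1, hF => by
      show deltaP δ (wset δ F n₀ S t) (F (n₀ + t)) = deltaP δ (wset δ F n₁ S t) (F (n₁ + t))
      rw [hF t (Nat.lt_succ_self t),
        wset_shift n₀ n₁ S t fun j hj => hF j (hj.trans (Nat.lt_succ_self t))]

lemma wset_biUnion {ι : Type} [DecidableEq ι] (n₀ : ℕ) (T : Finset ι) (V : ι → Finset L) :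
    ∀ t, wset δ F n₀ (T.biUnion V) t = T.biUnion fun i => wset δ F n₀ (V i) t
  | 0 => rfl
  | t+1 => by
      show deltaP δ (wset δ F n₀ (T.biUnion V) t) (F (n₀ + t)) = _
      rw [wset_biUnion n₀ T V t, deltaP_biUnion]
      rfl

lemma outcome_kern (μ0 : L → ℝ) (α : Hist L A → A → ℝ)
    (hα : α = fun h a => if a = F h.len h.last then 1 else 0) (n₀ : ℕ) :
    ∀ t l, outcome μ0 δ α (n₀ + t) l = ∑ l', outcome μ0 δ α n₀ l' * kern δ F n₀ t l' l
  | 0, l => by simp [kern]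
  | t+1, l => by
      have h1 : n₀ + (t + 1) = (n₀ + t) + 1 := by ring
      rw [h1, outcome_succ μ0 δ F α hα]
      have h2 : outcome μ0 δ α (n₀ + t) =
          fun x => ∑ l', outcome μ0 δ α n₀ l' * kern δ F n₀ t l' x := by
        funext x; exact outcome_kern μ0 α hα n₀ t x
      rw [h2, stepD_weighted]
      rfl


-- ## chunk 3

lemma exists_minRCSP_le {d : ℕ} (hd : 0 < d) (s : Fin d → Finset L) (cact : Fin d → L → A)
    (g' : Fin d → Finset L) (hg' : IsRCSP hd δ s cact g') :
    ∃ h : Fin d → Finset L, IsMinRCSP hd δ s cact h ∧ ∀ i, h i ⊆ g' i := by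
  classical
  let P : (Fin d → Finset L) → Prop := fun h => IsRCSP hd δ s cact h ∧ ∀ i, h i ⊆ g' i
  have hne : (Finset.univ.filter P).Nonempty :=
    ⟨g', Finset.mem_filter.2 ⟨Finset.mem_univ _, hg', fun i => subset_rfl⟩⟩
  obtain ⟨h, hh, hmin⟩ :=
    Finset.exists_min_image (Finset.univ.filter P) (fun h => ∑ i, (h i).card) hne
  rw [Finset.mem_filter] at hh
  obtain ⟨-, hRCS, hle⟩ := hh
  refine ⟨h, ⟨hRCS, ?_⟩, hle⟩
  intro h' hRCS' hle'
  have hP' : P h' := ⟨hRCS', fun i => (hle' i).trans (hle i)⟩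
  have hcard := hmin h' (Finset.mem_filter.2 ⟨Finset.mem_univ _, hP'⟩)
  have hci : ∀ i, (h' i).card ≤ (h i).card := fun i => Finset.card_le_card (hle' i)
  have hc2 : ∀ i, (h i).card ≤ (h' i).card := by
    by_contra hc
    push_neg at hc
    obtain ⟨i0, hi0⟩ := hc
    have : ∑ i, (h' i).card < ∑ i, (h i).card :=
      Finset.sum_lt_sum (fun i _ => hci i) ⟨i0, Finset.mem_univ _, hi0⟩
    omega
  funext i
  exact Finset.eq_of_subset_of_card_le (hle' i) (hc2 i)

lemma dist_support_singleton {X : L → ℝ} (hX : IsDist X) (y : L)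
    (hsupp : ∀ x, 0 < X x → x = y) : X y = 1 := by
  have : ∑ x, X x = X y := by
    apply Finset.sum_eq_single
    · intro x _ hxy
      rcases lt_or_eq_of_le (hX.1 x) with hp | hp
      · exact absurd (hsupp x hp) hxy
      · exact hp.symm
    · intro hy; exact absurd (Finset.mem_univ y) hy
  rw [← this, hX.2]

lemma delta_one_of_post_singleton (hδ : IsTrans δ) {l : L} {a : A} {y : L}
    (h : post δ l a = {y}) : δ l a y = 1 := by
  apply dist_support_singleton (hδ l a)
  intro x hx
  have hm : x ∈ post δ l a := mem_post_iff.2 hx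
  rw [h, Finset.mem_singleton] at hm
  exact hm

lemma le_dnorm (X : L → ℝ) (l : L) : X l ≤ dnorm X :=
  le_ciSup (Set.Finite.bddAbove (Set.finite_range X)) l

lemma dnorm_le_one [Nonempty L] {X : L → ℝ} (hX0 : ∀ l, 0 ≤ X l) (hX1 : ∑ l, X l = 1) :
    dnorm X ≤ 1 := by
  apply ciSup_le
  intro l
  calc X l ≤ ∑ l', X l' := Finset.single_le_sum (fun x _ => hX0 x) (Finset.mem_univ l)
  _ = 1 := hX1

lemma reach_sing (hδ : IsTrans δ) {d : ℕ} (hd : 0 < d) (s : Fin d → Finset L)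
    (cact : Fin d → L → A)
    (hcycle : ∀ i, deltaP δ (s i) (cact i) = s (cyc hd i))
    (g : Fin d → Finset L)
    (huniq : ∀ g', IsMinRCSP hd δ s cact g' → g' = g)
    (m : ℕ) (F : ℕ → L → A)
    (hFm : ∀ j, F (m + j) = cact ⟨j % d, Nat.mod_lt _ hd⟩)
    (l' : L) (hl' : l' ∈ s ⟨0, hd⟩) (y : L) (hy : y ∈ g ⟨0, hd⟩) :
    ∃ k, y ∈ wset δ F m {l'} (k * d) := by
  classical
  -- cell evolution of s₀
  have hcell : ∀ t, wset δ F m (s ⟨0, hd⟩) t = s ⟨t % d, Nat.mod_lt _ hd⟩ := by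
    intro t
    induction t with
    | zero =>
        show s ⟨0, hd⟩ = s ⟨0 % d, Nat.mod_lt _ hd⟩
        exact congrArg s (Fin.ext (Nat.zero_mod d).symm)
    | succ t ih =>
        show deltaP δ (wset δ F m (s ⟨0, hd⟩) t) (F (m + t)) = _
        rw [ih, hFm t, hcycle]
        exact congrArg s (Fin.ext (Nat.mod_add_mod t d 1))
  have hsub : ∀ t, wset δ F m {l'} t ⊆ s ⟨t % d, Nat.mod_lt _ hd⟩ := by
    intro t
    have := wset_mono (δ := δ) (F := F) (Finset.singleton_subset_iff.2 hl') m t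
    rw [hcell t] at this
    exact this
  -- pigeonhole
  obtain ⟨a0, b0, hne0, hab0⟩ :=
    Finite.exists_ne_map_eq_of_infinite (fun k : ℕ => wset δ F m {l'} (k * d))
  obtain ⟨a, b, hab, hlt⟩ : ∃ a b : ℕ, wset δ F m {l'} (a * d) = wset δ F m {l'} (b * d) ∧
      a < b := by
    rcases lt_or_gt_of_ne hne0 with h | h
    · exact ⟨a0, b0, hab0, h⟩
    · exact ⟨b0, a0, hab0.symm, h⟩
  set q := b - a with hq
  have hq1 : 1 ≤ q := by omega
  set V : ℕ → Finset L := fun t => wset δ F m {l'} ((a + t) * d) with hV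
  -- the once-around-the-cycle support map
  have hshift : ∀ (S : Finset L) (c : ℕ), wset δ F (m + c * d) S d = wset δ F m S d := by
    intro S c
    apply wset_shift
    intro j hj
    have h1 : m + c * d + j = m + (c * d + j) := by ring
    rw [h1, hFm (c * d + j), hFm j]
    have h2 : (c * d + j) % d = j % d := by
      rw [add_comm]
      exact Nat.add_mul_mod_self_right j c d
    exact congrArg cact (Fin.ext h2)
  have hFV : ∀ t, wset δ F m (V t) d = V (t + 1) := by
    intro t
    have h1 : (a + (t + 1)) * d = (a + t) * d + d := by ring
    rw [hV]
    show wset δ F m (wset δ F m {l'} ((a + t) * d)) d = wset δ F m {l'} ((a + (t + 1)) * d)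
    rw [h1, wset_add m ((a + t) * d) {l'} d, hshift]
  have hVq : V q = V 0 := by
    show wset δ F m {l'} ((a + q) * d) = wset δ F m {l'} ((a + 0) * d)
    have h1 : a + q = b := by omega
    have h2 : a + 0 = a := by ring
    rw [h1, h2, hab]
  set U : Finset L := (Finset.range q).biUnion V with hU
  have hUfix : wset δ F m U d = U := by
    rw [hU, wset_biUnion]
    ext x
    simp only [Finset.mem_biUnion, Finset.mem_range]
    constructor
    · rintro ⟨t, ht, hx⟩
      rw [hFV t] at hx
      by_cases h : t + 1 < q
      · exact ⟨t + 1, h, hx⟩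
      · have : t + 1 = q := by omega
        rw [this, hVq] at hx
        exact ⟨0, by omega, hx⟩
    · rintro ⟨t, ht, hx⟩
      by_cases h : t = 0
      · refine ⟨q - 1, by omega, ?_⟩
        rw [hFV (q - 1)]
        have : q - 1 + 1 = q := by omega
        rw [this, hVq]
        rw [h] at hx
        exact hx
      · refine ⟨t - 1, by omega, ?_⟩
        rw [hFV (t - 1)]
        have : t - 1 + 1 = t := by omega
        rw [this]
        exact hx
  have hUne : U.Nonempty := by
    obtain ⟨x, hx⟩ := wset_nonempty (δ := δ) (F := F) hδ (Finset.singleton_nonempty l') m ((a + 0) * d)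
    exact ⟨x, Finset.mem_biUnion.2 ⟨0, Finset.mem_range.2 (by omega), hx⟩⟩
  have hUs : U ⊆ s ⟨0, hd⟩ := by
    intro x hx
    obtain ⟨t, -, hx⟩ := Finset.mem_biUnion.1 hx
    have := hsub ((a + t) * d) hx
    have h0 : (a + t) * d % d = 0 := Nat.mul_mod_left (a + t) d
    rwa [show (⟨(a + t) * d % d, Nat.mod_lt _ hd⟩ : Fin d) = ⟨0, hd⟩ from Fin.ext h0] at this
  -- the constructed RCS
  set g' : Fin d → Finset L := fun i => wset δ F m U i with hg'
  have hwU : ∀ t, wset δ F m U t ⊆ s ⟨t % d, Nat.mod_lt _ hd⟩ := by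
    intro t
    have := wset_mono (δ := δ) (F := F) hUs m t
    rw [hcell t] at this
    exact this
  have hstep : ∀ (j : ℕ) (hj : j < d),
      (wset δ F m U j).biUnion (fun l => post δ l (cact ⟨j, hj⟩ l)) =
        wset δ F m U (j + 1) := by
    intro j hj
    show _ = deltaP δ (wset δ F m U j) (F (m + j))
    rw [hFm j]
    have : (⟨j % d, Nat.mod_lt _ hd⟩ : Fin d) = ⟨j, hj⟩ := Fin.ext (Nat.mod_eq_of_lt hj)
    rw [this]
    rfl
  have hRCS : IsRCSP hd δ s cact g' := by
    intro i
    refine ⟨wset_nonempty hδ hUne m i, ?_, ?_⟩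
    · have := hwU i
      rwa [show (⟨(i : ℕ) % d, Nat.mod_lt _ hd⟩ : Fin d) = i from
        Fin.ext (Nat.mod_eq_of_lt i.isLt)] at this
    · have h1 := hstep i i.isLt
      rw [show (⟨(i : ℕ), by omega⟩ : Fin d) = i from Fin.ext rfl] at h1
      rw [hg']
      show (wset δ F m U i).biUnion _ = wset δ F m U ((cyc hd i : Fin d) : ℕ)
      rw [h1]
      show wset δ F m U ((i : ℕ) + 1) = wset δ F m U (((i : ℕ) + 1) % d)
      by_cases h : (i : ℕ) + 1 < d
      · rw [Nat.mod_eq_of_lt h]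
      · have he : (i : ℕ) + 1 = d := by have := i.isLt; omega
        rw [he, Nat.mod_self]
        show wset δ F m U d = U
        exact hUfix
  obtain ⟨h, hhmin, hhle⟩ := exists_minRCSP_le hd s cact g' hRCS
  have := huniq h hhmin
  subst this
  have : y ∈ g' ⟨0, hd⟩ := hhle ⟨0, hd⟩ hy
  have hyU : y ∈ U := this
  obtain ⟨t, -, hyV⟩ := Finset.mem_biUnion.1 hyU
  exact ⟨a + t, hyV⟩

-- ## chunk 4: helpers for the main proof

lemma exists_pos_of_sum_pos {ι : Type} {T : Finset ι} {f : ι → ℝ} (h : 0 < ∑ i ∈ T, f i) :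
    ∃ i ∈ T, 0 < f i := by
  by_contra hc
  push_neg at hc
  have : ∑ i ∈ T, f i ≤ 0 := Finset.sum_nonpos hc
  linarith

lemma pos_pos_of_mul_pos_nonneg {a b : ℝ} (h : 0 < a * b) (ha : 0 ≤ a) (hb : 0 ≤ b) :
    0 < a ∧ 0 < b := by
  constructor
  · rcases lt_or_eq_of_le ha with h' | h'
    · exact h'
    · rw [← h', zero_mul] at h; linarith
  · rcases lt_or_eq_of_le hb with h' | h'
    · exact h'
    · rw [← h', mul_zero] at h; linarith


end AuxLemmas

/-- If the perfect-information subset construction has an accessible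
cycle `s_0 σ̂_0 … σ̂_{d-1} s_d` reached from the initial cell by a path
`p_0 σ̂'_0 … σ̂'_{m-1} p_m` (`p_0 = Supp(μ0)`, `p_m = s_0`), and the cycle has exactly one
minimal recurrent cyclic set `g`, all of whose elements are singletons, then the pure
strategy playing `σ̂'_k(Last h)` on histories of length `k < m` and
`σ̂_{(k-m) mod d}(Last h)` on histories of length `k ≥ m` is strongly synchronizing:
`lim_{n→∞} ‖X_n^α‖ = 1`. -/
theorem cycle_strategy_strongly_sync
    (μ0 : L → ℝ) (δ : L → A → L → ℝ)
    (hμ0 : IsDist μ0) (hδ : IsTrans δ)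
    (d : ℕ) (hd : 0 < d) (s : Fin d → Finset L) (cact : Fin d → L → A)
    (hcycle : ∀ i, deltaP δ (s i) (cact i) = s (cyc hd i))
    (m : ℕ) (p : ℕ → Finset L) (pact : ℕ → L → A)
    (hp0 : p 0 = initCell μ0) (hpm : p m = s ⟨0, hd⟩)
    (hpath : ∀ k, k < m → deltaP δ (p k) (pact k) = p (k + 1))
    (g : Fin d → Finset L)
    (hmin : IsMinRCSP hd δ s cact g)
    (huniq : ∀ g', IsMinRCSP hd δ s cact g' → g' = g)
    (hsing : ∀ i, (g i).card = 1)
    (α : Hist L A → A → ℝ)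
    (hα : α = fun h a =>
      if a = (if h.len < m then pact h.len h.last
              else cact ⟨(h.len - m) % d, Nat.mod_lt _ hd⟩ h.last)
      then 1 else 0) :
    Filter.Tendsto (fun n => dnorm (outcome μ0 δ α n)) atTop (nhds 1) := by

  classical
  set F : ℕ → L → A :=
    fun n lst => if n < m then pact n lst
      else cact ⟨(n - m) % d, Nat.mod_lt _ hd⟩ lst with hFdef
  have hαF : α = fun h a => if a = F h.len h.last then 1 else 0 := by
    rw [hα]
  set idx : ℕ → Fin d := fun n => ⟨(n - m) % d, Nat.mod_lt _ hd⟩ with hidxdef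
  -- singleton states
  choose ℓ hgℓ using fun i => Finset.card_eq_one.1 (hsing i)
  set ℓ0 : L := ℓ ⟨0, hd⟩ with hℓ0
  have hℓmem : ∀ i, ℓ i ∈ s i := fun i =>
    (hmin.1 i).2.1 (by rw [hgℓ i]; exact Finset.mem_singleton_self _)
  have hδ1 : ∀ i, δ (ℓ i) (cact i (ℓ i)) (ℓ (cyc hd i)) = 1 := by
    intro i
    have h1 := (hmin.1 i).2.2
    rw [hgℓ i, hgℓ (cyc hd i), Finset.singleton_biUnion] at h1
    exact delta_one_of_post_singleton hδ h1
  -- arithmetic facts about F and idx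
  have hFm : ∀ j, F (m + j) = cact ⟨j % d, Nat.mod_lt _ hd⟩ := by
    intro j
    funext lst
    show (if m + j < m then pact (m + j) lst
      else cact ⟨(m + j - m) % d, Nat.mod_lt _ hd⟩ lst) = _
    rw [if_neg (by omega : ¬ m + j < m), show m + j - m = j from by omega]
  have hFge : ∀ n, m ≤ n → F n = cact (idx n) := by
    intro n hn
    have h1 := hFm (n - m)
    rw [show m + (n - m) = n from by omega] at h1
    rw [h1]
  have hidxsucc : ∀ n, m ≤ n → idx (n + 1) = cyc hd (idx n) := by
    intro n hn
    apply Fin.ext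
    show (n + 1 - m) % d = ((n - m) % d + 1) % d
    rw [Nat.mod_add_mod, show n + 1 - m = n - m + 1 from by omega]
  have hidx0 : ∀ c, idx (m + c * d) = ⟨0, hd⟩ := by
    intro c
    apply Fin.ext
    show (m + c * d - m) % d = 0
    rw [show m + c * d - m = c * d from by omega]
    exact Nat.mul_mod_left c d
  -- basic facts about the outcome sequence
  have hYs : ∀ n, outcome μ0 δ α (n + 1) = stepD δ (F n) (outcome μ0 δ α n) :=
    outcome_succ μ0 δ F α hαF
  have hYnn : ∀ n l, 0 ≤ outcome μ0 δ α n l := by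
    intro n
    induction n with
    | zero => rw [outcome_zero]; exact hμ0.1
    | succ n ih => rw [hYs n]; exact fun l => stepD_nonneg hδ ih (F n) l
  have hYsum : ∀ n, ∑ l, outcome μ0 δ α n l = 1 := by
    intro n
    induction n with
    | zero => rw [outcome_zero]; exact hμ0.2
    | succ n ih => rw [hYs n, stepD_sum hδ]; exact ih
  -- support of the outcome
  have hwcell : ∀ n, wset δ F 0 (initCell μ0) n = (if n < m then p n else s (idx n)) := by
    intro n
    induction n with
    | zero =>
        show initCell μ0 = _
        by_cases h0 : 0 < m
        · rw [if_pos h0, hp0]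
        · have hm0 : m = 0 := by omega
          rw [if_neg h0]
          have h1 : idx 0 = ⟨0, hd⟩ := Fin.ext (by show (0 - m) % d = 0; simp)
          rw [h1, ← hpm, hm0, hp0]
    | succ n ih =>
        show deltaP δ (wset δ F 0 (initCell μ0) n) (F (0 + n)) = _
        rw [Nat.zero_add, ih]
        by_cases h1 : n < m
        · rw [if_pos h1]
          have hFn : F n = pact n := by
            funext lst
            show (if n < m then pact n lst else _) = _
            rw [if_pos h1]
          rw [hFn, hpath n h1]
          by_cases h2 : n + 1 < m
          · rw [if_pos h2]
          · have h3 : n + 1 = m := by omega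
            rw [if_neg h2, h3, hpm]
            apply congrArg s
            apply Fin.ext
            show (0 : ℕ) = (m - m) % d
            simp
        · have hn : m ≤ n := by omega
          rw [if_neg h1, hFge n hn, hcycle (idx n), if_neg (by omega : ¬ n + 1 < m)]
          exact congrArg s (hidxsucc n hn).symm
  have hYsupp : ∀ n l, 0 < outcome μ0 δ α n l → l ∈ wset δ F 0 (initCell μ0) n := by
    intro n l hpos
    have hk := outcome_kern (δ := δ) μ0 α hαF 0 n l
    rw [Nat.zero_add] at hk
    rw [hk] at hpos
    obtain ⟨l', -, hl'⟩ := exists_pos_of_sum_pos hpos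
    obtain ⟨h1, h2⟩ := pos_pos_of_mul_pos_nonneg hl' (hYnn 0 l') (kern_nonneg hδ 0 n l' l)
    rw [outcome_zero] at h1
    have hinit : l' ∈ initCell μ0 := by
      simp only [initCell, Finset.mem_filter, Finset.mem_univ, true_and]
      exact h1
    have hw := (kern_pos_iff hδ 0 n l' l).1 h2
    exact wset_mono (δ := δ) (F := F) (Finset.singleton_subset_iff.2 hinit) 0 n hw
  have hYsuppS : ∀ n, m ≤ n → ∀ l, 0 < outcome μ0 δ α n l → l ∈ s (idx n) := by
    intro n hn l hpos
    have := hYsupp n l hpos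
    rwa [hwcell n, if_neg (by omega : ¬ n < m)] at this
  -- monotonicity of the mass on the deterministic trajectory
  have hmono : ∀ n, m ≤ n →
      outcome μ0 δ α n (ℓ (idx n)) ≤ outcome μ0 δ α (n + 1) (ℓ (idx (n + 1))) := by
    intro n hn
    rw [hYs n]
    have h1 := stepD_ge hδ (hYnn n) (F n) (ℓ (idx n)) (ℓ (idx (n + 1)))
    have h2 : F n (ℓ (idx n)) = cact (idx n) (ℓ (idx n)) := by rw [hFge n hn]
    have h3 : δ (ℓ (idx n)) (cact (idx n) (ℓ (idx n))) (ℓ (idx (n + 1))) = 1 := by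
      rw [hidxsucc n hn]
      exact hδ1 (idx n)
    rw [h2, h3, mul_one] at h1
    exact h1
  have hmono' : ∀ n n', m ≤ n → n ≤ n' →
      outcome μ0 δ α n (ℓ (idx n)) ≤ outcome μ0 δ α n' (ℓ (idx n')) := by
    intro n n' hn hle
    induction n', hle using Nat.le_induction with
    | base => exact le_rfl
    | succ n' hle ih => exact ih.trans (hmono n' (by omega))
  -- the deterministic trajectory has kernel probability 1
  have hQ1 : ∀ t n, m ≤ n → kern δ F n t (ℓ (idx n)) (ℓ (idx (n + t))) = 1 := by
    intro t
    induction t with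
    | zero =>
        intro n hn
        show (if ℓ (idx n) = ℓ (idx n) then (1 : ℝ) else 0) = 1
        rw [if_pos rfl]
    | succ t ih =>
        intro n hn
        apply le_antisymm (kern_le_one (F := F) hδ n (t + 1) _ _)
        have h1 := stepD_ge hδ (kern_nonneg (F := F) hδ n t (ℓ (idx n))) (F (n + t))
          (ℓ (idx (n + t))) (ℓ (idx (n + t + 1)))
        have h2 := ih n hn
        have h3 : F (n + t) (ℓ (idx (n + t))) = cact (idx (n + t)) (ℓ (idx (n + t))) := by
          rw [hFge (n + t) (by omega)]
        have h4 : δ (ℓ (idx (n + t))) (cact (idx (n + t)) (ℓ (idx (n + t))))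
            (ℓ (idx (n + t + 1))) = 1 := by
          rw [hidxsucc (n + t) (by omega)]
          exact hδ1 (idx (n + t))
        rw [h2, h3, h4, mul_one] at h1
        exact h1
  -- reachability with positive probability
  have hy0 : ℓ0 ∈ g ⟨0, hd⟩ := by rw [hgℓ]; exact Finset.mem_singleton_self _
  have hs00 : ℓ0 ∈ s ⟨0, hd⟩ := hℓmem ⟨0, hd⟩
  have hex : ∀ l' : L, ∃ k, l' ∈ s ⟨0, hd⟩ → 0 < kern δ F m (k * d) l' ℓ0 := by
    intro l'
    by_cases h : l' ∈ s ⟨0, hd⟩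
    · obtain ⟨k, hk⟩ := reach_sing hδ hd s cact hcycle g huniq m F hFm l' h ℓ0 hy0
      exact ⟨k, fun _ => (kern_pos_iff hδ m (k * d) l' ℓ0).2 hk⟩
    · exact ⟨0, fun hc => absurd hc h⟩
  choose k0 hk0 using hex
  have hkstep : ∀ (l' : L) (k : ℕ),
      kern δ F m (k * d) l' ℓ0 ≤ kern δ F m ((k + 1) * d) l' ℓ0 := by
    intro l' k
    have hch := kern_chapman (δ := δ) (F := F) m (k * d) d l' ℓ0
    have h1 : kern δ F (m + k * d) d ℓ0 ℓ0 = 1 := by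
      have h2 := hQ1 d (m + k * d) (by omega)
      rw [hidx0 k] at h2
      rw [show m + k * d + d = m + (k + 1) * d from by ring, hidx0 (k + 1)] at h2
      exact h2
    calc kern δ F m (k * d) l' ℓ0
        = kern δ F m (k * d) l' ℓ0 * kern δ F (m + k * d) d ℓ0 ℓ0 := by rw [h1, mul_one]
      _ ≤ ∑ x, kern δ F m (k * d) l' x * kern δ F (m + k * d) d x ℓ0 :=
          Finset.single_le_sum (fun x _ => mul_nonneg (kern_nonneg hδ m _ l' x)
            (kern_nonneg hδ _ d x ℓ0)) (Finset.mem_univ ℓ0)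
      _ = kern δ F m (k * d + d) l' ℓ0 := (hch).symm
      _ = kern δ F m ((k + 1) * d) l' ℓ0 := by rw [show (k + 1) * d = k * d + d from by ring]
  have hkmono : ∀ (l' : L) (k k' : ℕ), k ≤ k' →
      kern δ F m (k * d) l' ℓ0 ≤ kern δ F m (k' * d) l' ℓ0 := by
    intro l' k k' hle
    induction k', hle using Nat.le_induction with
    | base => exact le_rfl
    | succ k' hle ih => exact ih.trans (hkstep l' k')
  set K0 : ℕ := Finset.univ.sup k0 + 1 with hK0def
  have hK0 : ∀ l' ∈ s ⟨0, hd⟩, 0 < kern δ F m (K0 * d) l' ℓ0 := by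
    intro l' h
    refine lt_of_lt_of_le (hk0 l' h) (hkmono l' (k0 l') K0 ?_)
    have := Finset.le_sup (f := k0) (Finset.mem_univ l')
    omega
  obtain ⟨lmin, hlminmem, hlmin⟩ := Finset.exists_min_image (s ⟨0, hd⟩)
    (fun l' => kern δ F m (K0 * d) l' ℓ0) ⟨ℓ0, hs00⟩
  set ε : ℝ := kern δ F m (K0 * d) lmin ℓ0 with hεdef
  have hε : 0 < ε := hK0 lmin hlminmem
  have hε1 : ε ≤ 1 := kern_le_one hδ m (K0 * d) lmin ℓ0
  have hεall : ∀ l' ∈ s ⟨0, hd⟩, ε ≤ kern δ F m (K0 * d) l' ℓ0 := hlmin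
  set D : ℕ := K0 * d with hDdef
  have hD : 0 < D := Nat.mul_pos (by omega) hd
  -- kernel over one macro-period is time-invariant at phase 0
  have hFshift : ∀ (c j' : ℕ), F (m + c * d + j') = F (m + j') := by
    intro c j'
    rw [show m + c * d + j' = m + (c * d + j') from by ring, hFm (c * d + j'), hFm j']
    apply congrArg cact
    apply Fin.ext
    show (c * d + j') % d = j' % d
    rw [add_comm]
    exact Nat.add_mul_mod_self_right j' c d
  -- the contraction estimate
  have hidxm : idx m = ⟨0, hd⟩ := by
    have h1 := hidx0 0
    rwa [show m + 0 * d = m from by ring] at h1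
  have hone : kern δ F m D ℓ0 ℓ0 = 1 := by
    have h2 := hQ1 D m le_rfl
    rw [show m + D = m + K0 * d from by rw [hDdef], hidx0 K0, hidxm] at h2
    exact h2
  have hcontr : ∀ j : ℕ, 1 - outcome μ0 δ α (m + (j + 1) * D) ℓ0 ≤
      (1 - ε) * (1 - outcome μ0 δ α (m + j * D) ℓ0) := by
    intro j
    have hkey := outcome_kern (δ := δ) μ0 α hαF (m + j * D) D ℓ0
    have hksh : kern δ F (m + j * D) D = kern δ F m D := by
      apply kern_shift
      intro j' _
      rw [show m + j * D + j' = m + (j * K0) * d + j' from by rw [hDdef]; ring]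
      exact hFshift (j * K0) j'
    rw [hksh] at hkey
    have hsplit : ∑ l', outcome μ0 δ α (m + j * D) l' * kern δ F m D l' ℓ0
        = outcome μ0 δ α (m + j * D) ℓ0 * kern δ F m D ℓ0 ℓ0 +
          ∑ l' ∈ Finset.univ.erase ℓ0,
            outcome μ0 δ α (m + j * D) l' * kern δ F m D l' ℓ0 :=
      (Finset.add_sum_erase _ _ (Finset.mem_univ ℓ0)).symm
    have hidxn : idx (m + j * D) = ⟨0, hd⟩ := by
      rw [show m + j * D = m + (j * K0) * d from by rw [hDdef]; ring]
      exact hidx0 (j * K0)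
    have hbound : ∀ l' ∈ Finset.univ.erase ℓ0,
        ε * outcome μ0 δ α (m + j * D) l' ≤
          outcome μ0 δ α (m + j * D) l' * kern δ F m D l' ℓ0 := by
      intro l' _
      rcases lt_or_eq_of_le (hYnn (m + j * D) l') with hpos | hzero
      · have hmem : l' ∈ s ⟨0, hd⟩ := by
          have := hYsuppS (m + j * D) (by omega) l' hpos
          rwa [hidxn] at this
        have h5 := hεall l' hmem
        calc ε * outcome μ0 δ α (m + j * D) l'
            ≤ kern δ F m (K0 * d) l' ℓ0 * outcome μ0 δ α (m + j * D) l' :=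
              mul_le_mul_of_nonneg_right h5 (hYnn _ _)
          _ = outcome μ0 δ α (m + j * D) l' * kern δ F m D l' ℓ0 := by
              rw [mul_comm, hDdef]
      · rw [← hzero, mul_zero, zero_mul]
    have hsumerase : ∑ l' ∈ Finset.univ.erase ℓ0, outcome μ0 δ α (m + j * D) l'
        = 1 - outcome μ0 δ α (m + j * D) ℓ0 := by
      have h6 := hYsum (m + j * D)
      rw [← Finset.add_sum_erase _ _ (Finset.mem_univ ℓ0)] at h6
      linarith
    have hge : outcome μ0 δ α (m + j * D) ℓ0 + ε * (1 - outcome μ0 δ α (m + j * D) ℓ0)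
        ≤ outcome μ0 δ α (m + j * D + D) ℓ0 := by
      rw [hkey, hsplit, hone, mul_one]
      have h7 : ε * (1 - outcome μ0 δ α (m + j * D) ℓ0)
          = ∑ l' ∈ Finset.univ.erase ℓ0, ε * outcome μ0 δ α (m + j * D) l' := by
        rw [← Finset.mul_sum, hsumerase]
      rw [h7]
      have h8 := Finset.sum_le_sum hbound
      linarith
    rw [show m + (j + 1) * D = m + j * D + D from by ring]
    linarith
  -- geometric decay
  have hgeo : ∀ j, 1 - outcome μ0 δ α (m + j * D) ℓ0 ≤ (1 - ε) ^ j := by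
    intro j
    induction j with
    | zero =>
        have := hYnn (m + 0 * D) ℓ0
        simp only [pow_zero]
        linarith
    | succ j ih =>
        calc 1 - outcome μ0 δ α (m + (j + 1) * D) ℓ0
            ≤ (1 - ε) * (1 - outcome μ0 δ α (m + j * D) ℓ0) := hcontr j
          _ ≤ (1 - ε) * (1 - ε) ^ j := by
              apply mul_le_mul_of_nonneg_left ih
              linarith
          _ = (1 - ε) ^ (j + 1) := by ring
  -- lower bound on the trajectory mass
  have hblow : ∀ n, m ≤ n →
      1 - (1 - ε) ^ ((n - m) / D) ≤ outcome μ0 δ α n (ℓ (idx n)) := by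
    intro n hn
    set j := (n - m) / D with hjdef
    have h1 : m + j * D ≤ n := by
      have h0 := Nat.div_mul_le_self (n - m) D
      rw [← hjdef] at h0
      omega
    have h2 := hmono' (m + j * D) n (by omega) h1
    have h3 : ℓ (idx (m + j * D)) = ℓ0 := by
      rw [show m + j * D = m + (j * K0) * d from by rw [hDdef]; ring, hidx0 (j * K0)]
    rw [h3] at h2
    have h4 := hgeo j
    linarith
  -- conclusion by squeezing
  have hNe : Nonempty L := ⟨ℓ0⟩
  have hup : ∀ n : ℕ, dnorm (outcome μ0 δ α n) ≤ 1 :=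
    fun n => dnorm_le_one (hYnn n) (hYsum n)
  have hlowle : ∀ n, m ≤ n →
      1 - (1 - ε) ^ ((n - m) / D) ≤ dnorm (outcome μ0 δ α n) := by
    intro n hn
    exact le_trans (hblow n hn) (le_dnorm _ _)
  have hdiv : Tendsto (fun n : ℕ => (n - m) / D) atTop atTop := by
    rw [tendsto_atTop_atTop]
    intro b
    refine ⟨m + b * D, fun n hn => ?_⟩
    rw [Nat.le_div_iff_mul_le hD]
    omega
  have hpow : Tendsto (fun n : ℕ => (1 - ε) ^ ((n - m) / D)) atTop (nhds 0) :=
    (tendsto_pow_atTop_nhds_zero_of_lt_one (by linarith) (by linarith)).comp hdiv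
  have hlowtend : Tendsto (fun n : ℕ => 1 - (1 - ε) ^ ((n - m) / D)) atTop (nhds 1) := by
    have := hpow.const_sub 1
    simpa using this
  apply tendsto_of_tendsto_of_tendsto_of_le_of_le' hlowtend tendsto_const_nhds
  · filter_upwards [eventually_ge_atTop m] with n hn
    exact hlowle n hn
  · filter_upwards with n
    exact hup n


end SyncMDP
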